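/- Let Y → ℙ² be the blow-up at 12 points p₁,…,p₁₂ lying on the cuspidal cubic C (avoiding the cusp), with exceptional classes e₁,…,e₁₂, and let E = 3π*h − Σeᵢ and F = 4π*h − Σeᵢ be the proper transforms of C and of a quartic D through the 12 points. If p₁,…,p₁₂ are chosen with 4h = Σpᵢ in Pic(C) and the classes p₁,…,p₁₂ linearly independent over ℚ in Pic(C)⊗ℚ, then a divisor class M = dπ*h + Σ mᵢeᵢ on Y restricts to zero in Pic(E) ≅ Pic(C) if and only if m₁ = ⋯ = m₁₂ = −d/4, i.e. M is a rational multiple of F. -/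
import Mathlib


open TensorProduct

/-- Let `Y → ℙ²` be the blow-up at 12 points `p₁,…,p₁₂` on the cuspidal
cubic `C` (avoiding the cusp), chosen with `4h = Σ pᵢ` in `Pic(C)` and with
`p₁,…,p₁₂` linearly independent over `ℚ` in `Pic(C) ⊗ ℚ`.  A divisor class
`M = dπ^*h + Σ mᵢeᵢ` on `Y` restricts to `dh + Σ mᵢpᵢ` in `Pic(E) ≅ Pic(C)`; this
restriction vanishes (rationally) iff `m₁ = ⋯ = m₁₂ = −d/4`, i.e. iff `M` is a rational
multiple of `F = 4π^*h − Σ eᵢ`.  We state this in `Pic(C) ⊗_ℤ ℚ`, writing `h` for the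
restriction of the hyperplane class and `p i` for the class of the point `pᵢ`. -/
theorem restriction_vanishes_iff_multiple_of_F
    {PicC : Type*} [AddCommGroup PicC]
    (h : PicC) (p : Fin 12 → PicC)
    (hsum : (4 : ℤ) • h = ∑ i, p i)
    (hind : LinearIndependent ℚ (fun i : Fin 12 => ((1 : ℚ) ⊗ₜ[ℤ] p i : ℚ ⊗[ℤ] PicC))) :
    ∀ (d : ℚ) (m : Fin 12 → ℚ),
      (d • ((1 : ℚ) ⊗ₜ[ℤ] h) + ∑ i, m i • ((1 : ℚ) ⊗ₜ[ℤ] p i) = (0 : ℚ ⊗[ℤ] PicC))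
        ↔ ∀ i, m i = -d / 4 := by
  intro d m
  have h4 : ((4 : ℚ)) • ((1 : ℚ) ⊗ₜ[ℤ] h : ℚ ⊗[ℤ] PicC) = ∑ i, (1 : ℚ) ⊗ₜ[ℤ] p i := by
    have := congrArg (fun x : PicC => ((1 : ℚ) ⊗ₜ[ℤ] x : ℚ ⊗[ℤ] PicC)) hsum
    rw [show ((4:ℚ)) = ((4:ℤ):ℚ) by norm_num, Int.cast_smul_eq_zsmul]
    simpa [tmul_smul, tmul_sum] using this
  have key : d • ((1 : ℚ) ⊗ₜ[ℤ] h : ℚ ⊗[ℤ] PicC) = ∑ i, (d / 4) • ((1 : ℚ) ⊗ₜ[ℤ] p i) := by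
    rw [← Finset.smul_sum, ← h4, smul_smul]
    norm_num
  rw [key, ← Finset.sum_add_distrib]
  have : ∑ i, ((d / 4) • ((1 : ℚ) ⊗ₜ[ℤ] p i : ℚ ⊗[ℤ] PicC) + m i • ((1 : ℚ) ⊗ₜ[ℤ] p i))
      = ∑ i, (d / 4 + m i) • ((1 : ℚ) ⊗ₜ[ℤ] p i) := by
    simp [add_smul]
  rw [this]
  rw [Fintype.linearIndependent_iff] at hind
  constructor
  · intro hz i
    have := hind _ hz i
    linarith
  · intro hm
    apply Finset.sum_eq_zero
    intro i _
    rw [hm i]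
    have : d / 4 + -d / 4 = 0 := by ring
    rw [this, zero_smul]
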